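/- arXiv:2101.12029 — 4 statements merged into one kernel-verified Lean document; each statement's English description precedes it below -/
import Mathlib

section
/- Let a₁,…,aₙ, b be positive rationals, q₁,…,qₙ, q positive rationals with qᵢ ≥ q for all i, and suppose ∑ᵢ qᵢ·log₂(aᵢ) ≥ q·log₂(b). Then for every real c ≥ 1, ∑ᵢ qᵢ·log₂(aᵢ + c) ≥ q·log₂(b + c). -/
/-!
With `m = b / (b + c)`, concavity of `log` puts `log (x + c)` above
`log (b + c) + m * (log x - log b)` for every `x > 0`. Summing with the weights `qᵢ` and using the
hypothesis bounds the left side below by `Q * (log (b + c) - m * log b) + m * qq * log b`, where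
`Q = ∑ qᵢ ≥ qq`. Since `b + c ≥ max b 1` and `0 ≤ m ≤ 1`, the bracket is nonnegative, so
`Q` may be replaced by `qq`.
-/

open Real Finset

theorem log_add_ge_log_add_mul_log_sub {x b c : ℝ} (hx : 0 < x) (hb : 0 < b) (hc : 0 ≤ c) :
    log (b + c) + b / (b + c) * (log x - log b) ≤ log (x + c) := by
  have hbc : 0 < b + c := by positivity
  have hconc := strictConcaveOn_log_Ioi.concaveOn.2 (Set.mem_Ioi.2 (div_pos hx hb))
    (Set.mem_Ioi.2 one_pos) (div_nonneg hb.le hbc.le) (div_nonneg hc hbc.le)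
    (by field_simp : b / (b + c) + c / (b + c) = 1)
  have hcomb : (b / (b + c)) • (x / b) + (c / (b + c)) • (1 : ℝ) = (x + c) / (b + c) := by
    simp only [smul_eq_mul]
    field_simp
  rw [hcomb, log_one, smul_zero, add_zero, smul_eq_mul, log_div hx.ne' hb.ne',
    log_div (by positivity) hbc.ne'] at hconc
  linarith

theorem div_mul_log_le_log_add {b c : ℝ} (hb : 0 < b) (hc : 0 ≤ c) (hbc : 1 ≤ b + c) :
    b / (b + c) * log b ≤ log (b + c) := by
  have hm0 : 0 ≤ b / (b + c) := by positivity
  have hm1 : b / (b + c) ≤ 1 := (div_le_one (by positivity)).2 (by linarith)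
  calc b / (b + c) * log b ≤ b / (b + c) * log (b + c) :=
        mul_le_mul_of_nonneg_left (log_le_log hb (by linarith)) hm0
    _ ≤ log (b + c) := mul_le_of_le_one_left (log_nonneg hbc) hm1

theorem mul_log_add_le_sum_mul_log_add {ι : Type*} {s : Finset ι} {w a : ι → ℝ} {v b c : ℝ}
    (hw : ∀ i ∈ s, 0 ≤ w i) (ha : ∀ i ∈ s, 0 < a i) (hb : 0 < b) (hc : 0 ≤ c)
    (hbc : 1 ≤ b + c) (hv : v ≤ ∑ i ∈ s, w i)
    (h : v * log b ≤ ∑ i ∈ s, w i * log (a i)) :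
    v * log (b + c) ≤ ∑ i ∈ s, w i * log (a i + c) := by
  set m := b / (b + c)
  have hm0 : 0 ≤ m := by positivity
  calc v * log (b + c) = v * (log (b + c) - m * log b) + m * (v * log b) := by ring
    _ ≤ (∑ i ∈ s, w i) * (log (b + c) - m * log b) + m * ∑ i ∈ s, w i * log (a i) :=
        add_le_add
          (mul_le_mul_of_nonneg_right hv (sub_nonneg.2 (div_mul_log_le_log_add hb hc hbc)))
          (mul_le_mul_of_nonneg_left h hm0)
    _ = ∑ i ∈ s, w i * (log (b + c) + m * (log (a i) - log b)) := by
        rw [sum_mul, mul_sum, ← sum_add_distrib]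
        exact sum_congr rfl fun i _ => by ring
    _ ≤ ∑ i ∈ s, w i * log (a i + c) :=
        sum_le_sum fun i hi => mul_le_mul_of_nonneg_left
          (log_add_ge_log_add_mul_log_sub (ha i hi) hb hc) (hw i hi)

theorem sum_mul_logb {ι : Type*} (s : Finset ι) (w f : ι → ℝ) (B : ℝ) :
    ∑ i ∈ s, w i * logb B (f i) = (∑ i ∈ s, w i * log (f i)) / log B := by
  simp only [sum_div, logb, mul_div_assoc]

theorem log_inequality_shift_general (n : ℕ) (hn : 1 ≤ n)
    (a : Fin n → ℚ) (b : ℚ) (q : Fin n → ℚ) (qq : ℚ)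
    (ha : ∀ i, 0 < a i) (hb : 0 < b) (hq : ∀ i, 0 < q i)
    (hge : ∀ i, q i ≥ qq)
    (h : ∑ i, (q i : ℝ) * Real.logb 2 (a i : ℝ) ≥ (qq : ℝ) * Real.logb 2 (b : ℝ)) :
    ∀ c : ℝ, 1 ≤ c →
      ∑ i, (q i : ℝ) * Real.logb 2 ((a i : ℝ) + c) ≥ (qq : ℝ) * Real.logb 2 ((b : ℝ) + c) := by
  intro c hc
  have hbR : (0 : ℝ) < b := by exact_mod_cast hb
  have hweights : (qq : ℝ) ≤ ∑ i, (q i : ℝ) :=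
    calc (qq : ℝ) ≤ q ⟨0, hn⟩ := by exact_mod_cast hge ⟨0, hn⟩
      _ ≤ ∑ i, (q i : ℝ) :=
        single_le_sum (f := fun i => (q i : ℝ)) (fun i _ => by exact_mod_cast (hq i).le)
          (mem_univ _)
  rw [ge_iff_le, sum_mul_logb, logb, ← mul_div_assoc,
    div_le_div_iff_of_pos_right (log_pos one_lt_two)] at h ⊢
  exact mul_log_add_le_sum_mul_log_add (fun i _ => by exact_mod_cast (hq i).le)
    (fun i _ => by exact_mod_cast ha i) hbR (by linarith) (by linarith) hweights h

theorem log_inequality_shift (n : ℕ) (hn : 1 ≤ n)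
    (a : Fin n → ℚ) (b : ℚ) (q : Fin n → ℚ) (qq : ℚ)
    (ha : ∀ i, 0 < a i) (hb : 0 < b) (hq : ∀ i, 0 < q i) (hqq : 0 < qq)
    (hge : ∀ i, q i ≥ qq)
    (h : ∑ i, (q i : ℝ) * Real.logb 2 (a i : ℝ) ≥ (qq : ℝ) * Real.logb 2 (b : ℝ)) :
    ∀ c : ℝ, 1 ≤ c →
      ∑ i, (q i : ℝ) * Real.logb 2 ((a i : ℝ) + c) ≥ (qq : ℝ) * Real.logb 2 ((b : ℝ) + c) :=
  log_inequality_shift_general n hn a b q qq ha hb hq hge h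
end

section
/- Let a₁,…,aₙ be positive reals and q₁,…,qₙ reals with qᵢ ≥ 1 for all i, n ≥ 1, and let c ≥ 1 be real. Then ∏ᵢ (aᵢ + c)^{qᵢ} ≥ ∏ᵢ aᵢ^{qᵢ} + c. -/
/-! Each factor satisfies `a ^ q + c ≤ a ^ q + c ^ q ≤ (a + c) ^ q` (superadditivity of `t ↦ t ^ q`
for `q ≥ 1`), and inequalities of the shape `x + c ≤ y` with `x ≥ 0`, `c ≥ 1` multiply:
`x x' + c ≤ (x + c)(x' + c)` because the cross terms and `c² - c` are nonnegative. -/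

lemma Real.rpow_add_le_add_rpow_of_one_le {a q c : ℝ} (ha : 0 ≤ a) (hq : 1 ≤ q) (hc : 1 ≤ c) :
    a ^ q + c ≤ (a + c) ^ q :=
  calc a ^ q + c ≤ a ^ q + c ^ q := by gcongr; exact Real.self_le_rpow_of_one_le hc hq
    _ ≤ (a + c) ^ q := Real.add_rpow_le_rpow_add ha (by linarith) hq

lemma mul_add_le_add_mul_add {R : Type*} [CommSemiring R] [PartialOrder R]
    [IsOrderedRing R] {x y c : R} (hx : 0 ≤ x) (hy : 0 ≤ y) (hc : 1 ≤ c) :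
    x * y + c ≤ (x + c) * (y + c) := by
  have hc₀ : 0 ≤ c := zero_le_one.trans hc
  have hcc : c ≤ c * c := by simpa using mul_le_mul_of_nonneg_left hc hc₀
  calc x * y + c ≤ x * y + (x * c + c * y + c * c) := by
        gcongr
        exact hcc.trans (le_add_of_nonneg_left (add_nonneg (mul_nonneg hx hc₀) (mul_nonneg hc₀ hy)))
    _ = (x + c) * (y + c) := by ring

lemma Finset.Nonempty.prod_add_le_prod {ι R : Type*} [CommSemiring R] [PartialOrder R]
    [IsOrderedRing R] {s : Finset ι} (hs : s.Nonempty) {f g : ι → R} {c : R} (hc : 1 ≤ c)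
    (hf : ∀ i ∈ s, 0 ≤ f i) (hfg : ∀ i ∈ s, f i + c ≤ g i) :
    ∏ i ∈ s, f i + c ≤ ∏ i ∈ s, g i := by
  induction hs using Finset.Nonempty.cons_induction with
  | singleton i => simpa using hfg i (mem_singleton_self i)
  | cons i s hi hs ih =>
    simp only [forall_mem_cons] at hf hfg
    rw [prod_cons, prod_cons]
    calc f i * ∏ j ∈ s, f j + c ≤ (f i + c) * (∏ j ∈ s, f j + c) :=
          mul_add_le_add_mul_add hf.1 (prod_nonneg hf.2) hc
      _ ≤ g i * ∏ j ∈ s, g j :=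
          have hc₀ : (0 : R) ≤ c := zero_le_one.trans hc
          mul_le_mul hfg.1 (ih hf.2 hfg.2) (add_nonneg (prod_nonneg hf.2) hc₀)
            ((add_nonneg hf.1 hc₀).trans hfg.1)

theorem prod_rpow_add_ge (n : ℕ) (hn : 1 ≤ n)
    (a : Fin n → ℝ) (q : Fin n → ℝ) (c : ℝ)
    (ha : ∀ i, 0 < a i) (hq : ∀ i, 1 ≤ q i) (hc : 1 ≤ c) :
    ∏ i, (a i + c) ^ (q i) ≥ (∏ i, (a i) ^ (q i)) + c := by
  have hne : (Finset.univ : Finset (Fin n)).Nonempty := Finset.univ_nonempty_iff.2 ⟨⟨0, hn⟩⟩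
  exact hne.prod_add_le_prod hc (fun i _ ↦ Real.rpow_nonneg (ha i).le _)
    (fun i _ ↦ Real.rpow_add_le_add_rpow_of_one_le (ha i).le (hq i) hc)
end

section
/- (Affine Farkas lemma, hard direction) Let A be an m×n real matrix, b ∈ ℝᵐ, u ∈ ℝⁿ, λ ∈ ℝ. Assume the system A·x ≤ b, x ≥ 0 is solvable. If for all x ≥ 0 with A·x ≤ b we have uᵀ·x ≤ λ, then there exists f ≥ 0 with uᵀ ≤ fᵀA componentwise and fᵀb ≤ λ. -/
/-!
Homogenize: the certificate `f` exists iff `(-u, λ)` dominates a nonnegative combination of the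
columns of the matrix obtained by stacking `-Aᵀ` over the row `bᵀ`. Finitely generated cones are
closed (by Carathéodory's theorem for cones, each is a finite union of images of orthants under
injective linear maps), so otherwise a hyperplane separates, giving `x ≥ 0` and `μ ≥ 0` with
`A x ≤ μ b` and `uᵀx > μ λ`. If `μ > 0` then `x / μ` is feasible with value above `λ`; if `μ = 0`
then `x` is a recession direction of the nonempty feasible region along which `uᵀ` is unbounded.
-/

open Matrix Function Set

section ConicCaratheodory

variable {𝕜 E ι : Type*} [Field 𝕜] [LinearOrder 𝕜] [IsStrictOrderedRing 𝕜]
  [AddCommGroup E] [Module 𝕜 E] [Fintype ι]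

lemma exists_sum_smul_eq_zero_of_not_linearIndepOn {g : ι → E} {s : Set ι}
    (h : ¬LinearIndepOn 𝕜 g s) :
    ∃ d : ι → 𝕜, (∀ i ∉ s, d i = 0) ∧ ∑ i, d i • g i = 0 ∧ ∃ i, 0 < d i := by
  simp only [linearIndepOn_iff'', not_forall, exists_prop] at h
  obtain ⟨t, d, hts, hdt, hsum, i, hit, hdi⟩ := h
  have hsum' : ∑ i, d i • g i = 0 := by
    rwa [← Finset.sum_subset (Finset.subset_univ t) fun i _ hi => by simp [hdt i hi]]
  have hout : ∀ i ∉ s, d i = 0 := fun i hi => hdt i fun hit => hi (hts hit)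
  rcases lt_or_gt_of_ne hdi with hneg | hpos
  · exact ⟨-d, fun i hi => by simp [hout i hi], by simp [neg_smul, hsum'], i, by simpa⟩
  · exact ⟨d, hout, hsum', i, hpos⟩

/-- The largest step `τ` along `-d` keeping `c - τ • d` nonnegative zeroes out a coordinate. -/
lemma exists_nonneg_sub_smul_support_ssubset {c d : ι → 𝕜} (hc : 0 ≤ c)
    (hd : ∀ i, c i = 0 → d i = 0) (hpos : ∃ i, 0 < d i) :
    ∃ τ : 𝕜, 0 ≤ c - τ • d ∧ support (c - τ • d) ⊂ support c := by
  classical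
  obtain ⟨i₀, hi₀, hmin⟩ := Finset.exists_min_image {i | 0 < d i} (fun i => c i / d i)
    (hpos.imp fun i hi => by simpa using hi)
  have hdi₀ : 0 < d i₀ := by simpa using hi₀
  refine ⟨c i₀ / d i₀, fun i => ?_, ?_⟩
  · rcases lt_or_ge 0 (d i) with hdi | hdi
    · have := hmin i (by simpa using hdi)
      rw [le_div_iff₀ hdi] at this
      simpa using this
    · have hτd := mul_nonpos_of_nonneg_of_nonpos (div_nonneg (hc i₀) hdi₀.le) hdi
      have hci : 0 ≤ c i := hc i
      simp only [Pi.sub_apply, Pi.smul_apply, smul_eq_mul, Pi.zero_apply]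
      linarith
  · refine LE.le.ssubset_of_not_superset (fun i hi => ?_) fun hsub => ?_
    · rw [mem_support] at hi ⊢
      contrapose! hi
      simp [hi, hd i hi]
    · have : c i₀ ≠ 0 := fun h0 => hdi₀.ne' (hd i₀ h0)
      exact hsub this (by simp [div_mul_cancel₀ _ hdi₀.ne'])

theorem exists_nonneg_linearIndepOn_support_sum_smul_eq (g : ι → E) (c : ι → 𝕜) (hc : 0 ≤ c) :
    ∃ c' : ι → 𝕜, 0 ≤ c' ∧ LinearIndepOn 𝕜 g (support c') ∧
      ∑ i, c' i • g i = ∑ i, c i • g i := by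
  by_cases hind : LinearIndepOn 𝕜 g (support c)
  · exact ⟨c, hc, hind, rfl⟩
  obtain ⟨d, hd, hdg, hpos⟩ := exists_sum_smul_eq_zero_of_not_linearIndepOn hind
  obtain ⟨τ, hτ, hss⟩ := exists_nonneg_sub_smul_support_ssubset hc
    (fun i hi => hd i (by simpa using hi)) hpos
  obtain ⟨c', hc', hind', hsum⟩ := exists_nonneg_linearIndepOn_support_sum_smul_eq g _ hτ
  refine ⟨c', hc', hind', hsum.trans ?_⟩
  simp [sub_smul, Finset.sum_sub_distrib, mul_smul, ← Finset.smul_sum, hdg]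
termination_by (support c).ncard
decreasing_by exact Set.ncard_lt_ncard hss (Set.toFinite _)

end ConicCaratheodory

namespace PointedCone

variable {R E ι : Type*} [Semiring R] [PartialOrder R] [IsOrderedRing R]
  [AddCommMonoid E] [Module R E] [Fintype ι]

lemma mem_hull_range_iff {g : ι → E} {x : E} :
    x ∈ hull R (range g) ↔ ∃ c : ι → R, 0 ≤ c ∧ ∑ i, c i • g i = x := by
  rw [Submodule.mem_span_range_iff_exists_fun]
  constructor
  · rintro ⟨c, rfl⟩
    exact ⟨fun i => c i, fun i => (c i).2, by simp [Nonneg.coe_smul]⟩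
  · rintro ⟨c, hc, rfl⟩
    exact ⟨fun i => ⟨c i, hc i⟩, by simp [Nonneg.mk_smul]⟩

variable {E ι : Type*} [AddCommGroup E] [Module ℝ E] [TopologicalSpace E] [IsTopologicalAddGroup E]
  [ContinuousSMul ℝ E] [T2Space E] [Fintype ι]

lemma isClosed_hull_range_of_linearIndependent {g : ι → E} (hg : LinearIndependent ℝ g) :
    IsClosed (hull ℝ (range g) : Set E) := by
  have hrange : (hull ℝ (range g) : Set E) = Fintype.linearCombination ℝ g '' Ici 0 := by
    ext x
    simp [mem_hull_range_iff, Fintype.linearCombination_apply]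
  rw [hrange]
  refine (LinearMap.isClosedEmbedding_of_injective ?_).isClosedMap _ isClosed_Ici
  exact LinearMap.ker_eq_bot.mpr (linearIndependent_iff_injective_fintypeLinearCombination.mp hg)

lemma isClosed_hull_range (g : ι → E) : IsClosed (hull ℝ (range g) : Set E) := by
  have hunion : (hull ℝ (range g) : Set E) =
      ⋃ s : {s : Set ι // LinearIndepOn ℝ g s}, (hull ℝ (g '' s) : Set E) := by
    refine Subset.antisymm (fun x hx => ?_) (iUnion_subset fun s => Submodule.span_mono ?_)
    · obtain ⟨c, hc, rfl⟩ := mem_hull_range_iff.mp hx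
      obtain ⟨c', hc', hind, hsum⟩ := exists_nonneg_linearIndepOn_support_sum_smul_eq g c hc
      refine mem_iUnion.mpr ⟨⟨_, hind⟩, hsum ▸ Submodule.sum_mem _ fun i _ => ?_⟩
      by_cases hi : c' i = 0
      · simp [hi]
      · exact smul_mem _ (hc' i) (subset_hull (mem_image_of_mem g hi))
    · exact image_subset_range g s
  rw [hunion]
  refine isClosed_iUnion_of_finite fun s => ?_
  have := Fintype.ofFinite s.1
  rw [image_eq_range]
  exact isClosed_hull_range_of_linearIndependent s.2

theorem exists_strongDual_nonneg_of_notMem_hull_range [LocallyConvexSpace ℝ E] {g : ι → E}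
    {x : E} (hx : x ∉ hull ℝ (range g)) :
    ∃ f : StrongDual ℝ E, (∀ i, 0 ≤ f (g i)) ∧ f x < 0 := by
  obtain ⟨f, hf, hfx⟩ :=
    ProperCone.hyperplane_separation_point ⟨hull ℝ (range g), isClosed_hull_range g⟩ hx
  exact ⟨f, fun i => hf _ (subset_hull (mem_range_self i)), hfx⟩

end PointedCone

namespace Matrix

variable {κ ι : Type*} [Fintype κ] [Fintype ι]

theorem exists_nonneg_mulVec_eq_or_exists_vecMul_nonneg (M : Matrix κ ι ℝ) (v : κ → ℝ) :
    (∃ c, 0 ≤ c ∧ M *ᵥ c = v) ∨ ∃ y, 0 ≤ y ᵥ* M ∧ y ⬝ᵥ v < 0 := by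
  classical
  have hcols : ∀ c, M *ᵥ c = ∑ i, c i • Mᵀ i := fun c => by
    simp [mulVec_eq_sum]
  by_cases hv : v ∈ PointedCone.hull ℝ (range Mᵀ)
  · obtain ⟨c, hc, hcv⟩ := PointedCone.mem_hull_range_iff.mp hv
    exact Or.inl ⟨c, hc, (hcols c).trans hcv⟩
  · obtain ⟨f, hf, hfv⟩ := PointedCone.exists_strongDual_nonneg_of_notMem_hull_range hv
    obtain ⟨y, hy⟩ := (dotProductEquiv ℝ κ).surjective (f : Module.Dual ℝ (κ → ℝ))
    have hfy : ∀ w, f w = y ⬝ᵥ w := fun w => (LinearMap.congr_fun hy w).symm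
    refine Or.inr ⟨y, fun i => ?_, (hfy v).symm.trans_lt hfv⟩
    exact (hf i).trans_eq (hfy _)

theorem exists_nonneg_mulVec_le_or_exists_nonneg_vecMul_nonneg (M : Matrix κ ι ℝ) (v : κ → ℝ) :
    (∃ c, 0 ≤ c ∧ M *ᵥ c ≤ v) ∨ ∃ y, 0 ≤ y ∧ 0 ≤ y ᵥ* M ∧ y ⬝ᵥ v < 0 := by
  classical
  rcases exists_nonneg_mulVec_eq_or_exists_vecMul_nonneg (fromCols M (1 : Matrix κ κ ℝ)) v with
    ⟨c, hc, hcv⟩ | ⟨y, hy, hyv⟩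
  · refine Or.inl ⟨c ∘ Sum.inl, fun i => hc _, ?_⟩
    rw [← hcv, fromCols_mulVec, one_mulVec]
    exact le_add_of_nonneg_right fun k => hc _
  · rw [vecMul_fromCols, vecMul_one] at hy
    exact Or.inr ⟨y, fun k => hy (Sum.inr k), fun i => hy (Sum.inl i), hyv⟩

end Matrix

section AffineFarkas

variable {m n : Type*} [Fintype n] {A : Matrix m n ℝ} {b : m → ℝ} {u : n → ℝ} {lam : ℝ}

lemma dotProduct_nonpos_of_mulVec_nonpos (hsolv : ∃ x₀, 0 ≤ x₀ ∧ A *ᵥ x₀ ≤ b)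
    (h : ∀ x, 0 ≤ x → A *ᵥ x ≤ b → u ⬝ᵥ x ≤ lam) {x : n → ℝ} (hx : 0 ≤ x)
    (hAx : A *ᵥ x ≤ 0) : u ⬝ᵥ x ≤ 0 := by
  obtain ⟨x₀, hx₀, hAx₀⟩ := hsolv
  by_contra! hux
  have hray : ∀ t : ℝ, 0 ≤ t → u ⬝ᵥ x₀ + t * u ⬝ᵥ x ≤ lam := fun t ht => by
    have hAt : A *ᵥ (x₀ + t • x) ≤ b := by
      rw [mulVec_add, mulVec_smul]
      simpa using add_le_add hAx₀ (smul_nonpos_of_nonneg_of_nonpos ht hAx)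
    simpa [dotProduct_add, dotProduct_smul] using h _ (add_nonneg hx₀ (smul_nonneg ht hx)) hAt
  have hlam := hray 0 le_rfl
  have := hray ((lam - u ⬝ᵥ x₀ + 1) / u ⬝ᵥ x) (div_nonneg (by linarith) hux.le)
  rw [div_mul_cancel₀ _ hux.ne'] at this
  linarith

lemma dotProduct_le_mul_of_mulVec_le_smul (hsolv : ∃ x₀, 0 ≤ x₀ ∧ A *ᵥ x₀ ≤ b)
    (h : ∀ x, 0 ≤ x → A *ᵥ x ≤ b → u ⬝ᵥ x ≤ lam) {x : n → ℝ} {μ : ℝ} (hx : 0 ≤ x)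
    (hμ : 0 ≤ μ) (hAx : A *ᵥ x ≤ μ • b) : u ⬝ᵥ x ≤ μ * lam := by
  rcases hμ.eq_or_lt with rfl | hμ
  · simpa using dotProduct_nonpos_of_mulVec_nonpos hsolv h hx (by simpa using hAx)
  · have hAx' : A *ᵥ (μ⁻¹ • x) ≤ b := by
      rw [mulVec_smul, ← inv_smul_smul₀ hμ.ne' b]
      exact smul_le_smul_of_nonneg_left hAx (inv_nonneg.mpr hμ.le)
    have := h _ (smul_nonneg (inv_nonneg.mpr hμ.le) hx) hAx'
    rwa [dotProduct_smul, smul_eq_mul, inv_mul_le_iff₀ hμ] at this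

end AffineFarkas

theorem farkas_hard (m n : ℕ) (A : Matrix (Fin m) (Fin n) ℝ) (b : Fin m → ℝ)
    (u : Fin n → ℝ) (lam : ℝ)
    (hsolv : ∃ x : Fin n → ℝ, (∀ j, 0 ≤ x j) ∧ (∀ i, A.mulVec x i ≤ b i))
    (h : ∀ x : Fin n → ℝ, (∀ j, 0 ≤ x j) → (∀ i, A.mulVec x i ≤ b i) → u ⬝ᵥ x ≤ lam) :
    ∃ f : Fin m → ℝ, (∀ i, 0 ≤ f i) ∧ (∀ j, u j ≤ Matrix.vecMul f A j) ∧
      f ⬝ᵥ b ≤ lam := by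
  rcases exists_nonneg_mulVec_le_or_exists_nonneg_vecMul_nonneg
      (fromRows (-Aᵀ) (replicateRow Unit b)) (Sum.elim (-u) fun _ => lam) with ⟨f, hf, hfM⟩ | ⟨y, hy, hyM, hyv⟩
  · refine ⟨f, hf, fun j => ?_, ?_⟩
    · simpa [neg_mulVec, mulVec_transpose] using hfM (Sum.inl j)
    · exact (dotProduct_comm f b).trans_le (hfM (Sum.inr ()))
  · set x := y ∘ Sum.inl
    set μ := y (Sum.inr ())
    have hyA : y ᵥ* fromRows (-Aᵀ) (replicateRow Unit b) = μ • b - A *ᵥ x := by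
      rw [vecMul_fromRows, vecMul_neg, vecMul_transpose, sub_eq_neg_add]
      congr 1
      ext i
      simp [μ, vecMul, dotProduct]
    have hyu : y ⬝ᵥ Sum.elim (-u) (fun _ => lam) = μ * lam - u ⬝ᵥ x := by
      simp [x, μ, dotProduct, Fintype.sum_sum_type, sub_eq_neg_add, mul_comm]
    rw [hyA, sub_nonneg] at hyM
    have := dotProduct_le_mul_of_mulVec_le_smul (x := x) hsolv h (fun j => hy _) (hy _) hyM
    linarith
end

section
/- (Sharing lemma for potentials) Let u be a binary tree, and let Q assign coefficients q₁, q₂ ≥ 0 and a finitely supported family (q_{(a₁,a₂,b)})_{a₁,a₂,b∈ℕ} of nonnegative rationals. Define Φ(u₁,u₂ | Q) = q₁·rk(u₁) + q₂·rk(u₂) + ∑ q_{(a₁,a₂,b)}·log₂(a₁|u₁| + a₂|u₂| + b). Then there exists an annotation ▽Q of length 1 such that Φ(u,u | Q) = Φ(u | ▽Q); concretely, ▽Q has rank coefficient q₁+q₂ and coefficient of log₂(a|u|+b) equal to ∑_{a₁+a₂=a} q_{(a₁,a₂,b)}. -/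
inductive BTree where
  | leaf : BTree
  | node : BTree → ℕ → BTree → BTree

def BTree.size : BTree → ℕ
  | .leaf => 1
  | .node l _ r => l.size + r.size

noncomputable def log2p (n : ℕ) : ℝ := Real.logb 2 (max n 1 : ℕ)

noncomputable def BTree.rk : BTree → ℝ
  | .leaf => 1
  | .node l _ r => l.rk + log2p l.size + log2p r.size + r.rk

/-!
With both arguments equal to `u`, the term `log₂(a₁|u| + a₂|u| + b)` depends on `(a₁, a₂, b)`
only through `(a₁ + a₂, b)`, so the finite sum regroups along the fibres of that map; the two rank
terms simply add.
-/

open Function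

theorem finsum_mem_fiberwise {α β M : Type*} [AddCommMonoid M] {f : α → M}
    (hf : (support f).Finite) (φ : α → β) :
    ∑ᶠ b, ∑ᶠ a ∈ φ ⁻¹' {b}, f a = ∑ᶠ a, f a := by
  classical
  set s := hf.toFinset
  have hfiber (b : β) : ∑ᶠ a ∈ φ ⁻¹' {b}, f a = ∑ a ∈ s with φ a = b, f a :=
    finsum_mem_eq_sum_of_inter_support_eq _ (by ext; simp [s, and_comm])
  simp only [hfiber]
  rw [finsum_eq_sum_of_support_subset _ (s.support_of_fiberwise_sum_subset_image f φ),
    Finset.sum_fiberwise_of_maps_to (fun a ha => Finset.mem_image_of_mem φ ha),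
    finsum_eq_sum_of_support_subset (s := s) _ (by simp [s])]

theorem finsum_mul_comp_eq_finsum_fiberwise_mul {α β R : Type*} [NonUnitalNonAssocSemiring R]
    {f : α → R} (hf : (support f).Finite) (φ : α → β) (g : β → R) :
    ∑ᶠ a, f a * g (φ a) = ∑ᶠ b, (∑ᶠ a ∈ φ ⁻¹' {b}, f a) * g b := by
  rw [← finsum_mem_fiberwise (hf.subset (support_mul_subset_left _ _)) φ]
  refine finsum_congr fun b => ?_
  calc ∑ᶠ a ∈ φ ⁻¹' {b}, f a * g (φ a) = ∑ᶠ a ∈ φ ⁻¹' {b}, f a * g b :=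
        finsum_mem_congr rfl fun a ha => by rw [ha]
    _ = (∑ᶠ a ∈ φ ⁻¹' {b}, f a) * g b :=
        ((AddMonoidHom.mulRight (g b)).map_finsum_mem' (hf.inter_of_right _)).symm

theorem sharing_lemma_general (u : BTree) (q₁ q₂ : ℚ)
    (q : ℕ × ℕ × ℕ → ℚ) (hfin : (Function.support q).Finite) :
    ∃ (r : ℚ) (q' : ℕ × ℕ → ℚ),
      r = q₁ + q₂ ∧
      (∀ ab : ℕ × ℕ,
        q' ab = ∑ᶠ p ∈ {p : ℕ × ℕ × ℕ | p.1 + p.2.1 = ab.1 ∧ p.2.2 = ab.2}, q p) ∧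
      (q₁ : ℝ) * u.rk + (q₂ : ℝ) * u.rk +
          ∑ᶠ p : ℕ × ℕ × ℕ,
            (q p : ℝ) * Real.logb 2 ((p.1 * u.size + p.2.1 * u.size + p.2.2 : ℕ) : ℝ)
        = (r : ℝ) * u.rk +
          ∑ᶠ ab : ℕ × ℕ, (q' ab : ℝ) * Real.logb 2 ((ab.1 * u.size + ab.2 : ℕ) : ℝ) := by
  refine ⟨_, _, rfl, fun _ => rfl, ?_⟩
  set n := u.size
  let φ : ℕ × ℕ × ℕ → ℕ × ℕ := fun p => (p.1 + p.2.1, p.2.2)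
  have hfiber (ab : ℕ × ℕ) :
      {p : ℕ × ℕ × ℕ | p.1 + p.2.1 = ab.1 ∧ p.2.2 = ab.2} = φ ⁻¹' {ab} := by
    ext; simp [φ, Prod.ext_iff]
  have hsize (p : ℕ × ℕ × ℕ) : p.1 * n + p.2.1 * n + p.2.2 = (φ p).1 * n + (φ p).2 := by
    simp only [φ]; ring
  have hcast (ab : ℕ × ℕ) : ((∑ᶠ p ∈ φ ⁻¹' {ab}, q p : ℚ) : ℝ) = ∑ᶠ p ∈ φ ⁻¹' {ab}, (q p : ℝ) :=
    (Rat.castHom ℝ).toAddMonoidHom.map_finsum_mem' (hfin.inter_of_right _)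
  simp only [hfiber, hsize, hcast]
  rw [Rat.cast_add, add_mul, finsum_mul_comp_eq_finsum_fiberwise_mul
    (by simpa [support] using hfin) φ (fun ab => Real.logb 2 ((ab.1 * n + ab.2 : ℕ) : ℝ))]

theorem sharing_lemma (u : BTree) (q₁ q₂ : ℚ) (hq₁ : 0 ≤ q₁) (hq₂ : 0 ≤ q₂)
    (q : ℕ × ℕ × ℕ → ℚ) (hq : ∀ p, 0 ≤ q p) (hfin : (Function.support q).Finite) :
    ∃ (r : ℚ) (q' : ℕ × ℕ → ℚ),
      r = q₁ + q₂ ∧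
      (∀ ab : ℕ × ℕ,
        q' ab = ∑ᶠ p ∈ {p : ℕ × ℕ × ℕ | p.1 + p.2.1 = ab.1 ∧ p.2.2 = ab.2}, q p) ∧
      (q₁ : ℝ) * u.rk + (q₂ : ℝ) * u.rk +
          ∑ᶠ p : ℕ × ℕ × ℕ,
            (q p : ℝ) * Real.logb 2 ((p.1 * u.size + p.2.1 * u.size + p.2.2 : ℕ) : ℝ)
        = (r : ℝ) * u.rk +
          ∑ᶠ ab : ℕ × ℕ, (q' ab : ℝ) * Real.logb 2 ((ab.1 * u.size + ab.2 : ℕ) : ℝ) :=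
  sharing_lemma_general u q₁ q₂ q hfin
end
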